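/- arXiv:1706.05646 — 7 statements merged into one kernel-verified Lean document; each statement's English description precedes it below -/
import Mathlib

section
/- Let d ≥ 1, a ∈ [0,1], and suppose there exists a bounded function f : ℤ → ℝ such that ((u-1)^d · f)(m) ∈ {a, a-1} for all m ∈ ℤ, where ((u-1)^d · f)(m) = ∑_{i=0}^d (-1)^{d-i} binom(d,i) f(m+i). Then there exists a balanced word w ∈ {0,1}^{ℤ^d} with density a. -/
/-!
Put `g := Δ^d f`, which takes only the values `a` and `a - 1`, and let `w x = 1` exactly when
`g (x₁ + ⋯ + x_d) = a - 1`. In a box `R` the number of ones is then `a |R| - ∑_{x ∈ R} g (∑ xᵢ)`.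
Summing `Δ^d f (∑ xᵢ)` over `R` telescopes once in each coordinate, leaving an alternating sum
of `2^d` values of `f`, so the discrepancy `#ones - a |R|` is bounded by `2^d sup |f|`. This bound
gives balancedness and density `a` at once.
-/

open Finset Filter Topology fwdDiff

noncomputable def intBox {d : ℕ} (A B : Fin d → ℤ) : Finset (Fin d → ℤ) :=
  Fintype.piFinset fun i => Ico (A i) (B i)

lemma card_intBox_add {d : ℕ} (A B t : Fin d → ℤ) :
    #(intBox (A + t) (B + t)) = #(intBox A B) := by
  simp only [intBox, Fintype.card_piFinset, Pi.add_apply, Int.card_Ico, add_sub_add_right_eq_sub]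

lemma sum_intBox_succ {E : Type*} [AddCommMonoid E] {n : ℕ} (A B : Fin (n + 1) → ℤ)
    (F : (Fin (n + 1) → ℤ) → E) :
    ∑ x ∈ intBox A B, F x =
      ∑ x₀ ∈ Ico (A 0) (B 0), ∑ y ∈ intBox (Fin.tail A) (Fin.tail B), F (Fin.cons x₀ y) := by
  have h := filter_piFinset_eq_map_consEquiv (fun i => Ico (A i) (B i)) fun _ => True
  simp only [filter_true] at h
  rw [intBox, h, sum_map, sum_product]
  rfl

lemma Int.sum_Ico_fwdDiff {G : Type*} [AddCommGroup G] (k : ℤ → G) {A B : ℤ} (hAB : A ≤ B) :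
    ∑ x ∈ Ico A B, Δ_[1] k x = k B - k A := by
  induction B, hAB using Int.leInduction with
  | base => simp
  | succ B hAB ih =>
    rw [Ico_add_one_right_eq_Icc, ← Ico_insert_right hAB, sum_insert right_notMem_Ico, ih,
      fwdDiff]
    abel

lemma fwdDiff_iter_eq_sum_choose {R : Type*} [Ring R] (f : ℤ → R) (n : ℕ) (m : ℤ) :
    Δ_[1] ^[n] f m = ∑ i ∈ range (n + 1), (-1 : R) ^ (n - i) * (n.choose i : R) * f (m + i) := by
  rw [fwdDiff_iter_eq_sum_shift]
  refine sum_congr rfl fun i _ => ?_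
  simp [zsmul_eq_mul, mul_assoc]

lemma norm_sum_intBox_fwdDiff_iter_le {E : Type*} [SeminormedAddCommGroup E] {h : ℤ → E} {C : ℝ}
    (hC : ∀ m, ‖h m‖ ≤ C) (n : ℕ) (c : ℤ) (A B : Fin n → ℤ) :
    ‖∑ x ∈ intBox A B, Δ_[1] ^[n] h (c + ∑ i, x i)‖ ≤ 2 ^ n * C := by
  induction n generalizing c with
  | zero => simpa [intBox] using hC c
  | succ n ih =>
    rw [sum_intBox_succ]
    by_cases hAB : A 0 ≤ B 0
    · have telescope : ∀ y : Fin n → ℤ,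
          ∑ x₀ ∈ Ico (A 0) (B 0), Δ_[1] ^[n + 1] h (c + ∑ i, Fin.cons x₀ y i) =
            Δ_[1] ^[n] h (c + B 0 + ∑ i, y i) - Δ_[1] ^[n] h (c + A 0 + ∑ i, y i) := by
        intro y
        have := Int.sum_Ico_fwdDiff (fun x₀ => Δ_[1] ^[n] h (c + x₀ + ∑ i, y i)) hAB
        simp only [Fin.sum_cons, Function.iterate_succ_apply']
        convert this using 2 with x₀
        simp [fwdDiff, add_assoc, add_comm, add_left_comm]
      rw [sum_comm, sum_congr rfl fun y _ => telescope y, sum_sub_distrib]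
      calc _ ≤ 2 ^ n * C + 2 ^ n * C := (norm_sub_le _ _).trans (add_le_add (ih _ _ _) (ih _ _ _))
        _ = 2 ^ (n + 1) * C := by ring
    · rw [Ico_eq_empty (by omega), sum_empty, norm_zero]
      have hC0 : 0 ≤ C := (norm_nonneg _).trans (hC 0)
      positivity

lemma card_filter_eq_mul_card_sub_sum {α : Type*} (s : Finset α) {φ : α → ℝ} {a : ℝ}
    [DecidablePred fun x => φ x = a - 1] (hφ : ∀ x ∈ s, φ x = a ∨ φ x = a - 1) :
    (#{x ∈ s | φ x = a - 1} : ℝ) = a * #s - ∑ x ∈ s, φ x := by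
  rw [natCast_card_filter, mul_comm, ← nsmul_eq_mul, ← sum_const, ← sum_sub_distrib]
  refine sum_congr rfl fun x hx => ?_
  rcases hφ x hx with h | h <;> simp [h, (sub_one_lt a).ne']

lemma tendsto_div_of_abs_sub_mul_le {ι : Type*} {l : Filter ι} {u v : ι → ℝ} {a K : ℝ}
    (hv : Tendsto v l atTop) (h : ∀ i, |u i - a * v i| ≤ K) :
    Tendsto (fun i => u i / v i) l (𝓝 a) := by
  have hKv : Tendsto (fun i => K / v i) l (𝓝 0) := tendsto_const_nhds.div_atTop hv
  refine tendsto_sub_nhds_zero_iff.mp (squeeze_zero_norm' ?_ hKv)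
  filter_upwards [hv.eventually_gt_atTop 0] with i hi
  rw [Real.norm_eq_abs, div_sub' hi.ne', abs_div, abs_of_pos hi, mul_comm]
  exact div_le_div_of_nonneg_right (h i) hi.le

lemma balanced_and_density_of_discrepancy_le {d : ℕ} (w : (Fin d → ℤ) → ℕ) {a K : ℝ}
    (hK : ∀ A B, |(#{x ∈ intBox A B | w x = 1} : ℝ) - a * #(intBox A B)| ≤ K) :
    (∃ M : ℝ, 0 < M ∧ ∀ A B t : Fin d → ℤ,
      |(#{x ∈ intBox A B | w x = 1} : ℝ) - #{x ∈ intBox (A + t) (B + t) | w x = 1}| ≤ M) ∧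
    ∀ A B : ℕ → Fin d → ℤ, Tendsto (fun n => #(intBox (A n) (B n))) atTop atTop →
      Tendsto (fun n => (#{x ∈ intBox (A n) (B n) | w x = 1} : ℝ) / #(intBox (A n) (B n)))
        atTop (𝓝 a) := by
  have hK0 : 0 ≤ K := (abs_nonneg _).trans (hK 0 0)
  refine ⟨⟨2 * K + 1, by positivity, fun A B t => ?_⟩, fun A B hAB => ?_⟩
  · have hshift := hK (A + t) (B + t)
    rw [card_intBox_add] at hshift
    calc _ ≤ K + K := (abs_sub_le _ (a * #(intBox A B) : ℝ) _).trans
          (add_le_add (hK A B) ((abs_sub_comm _ _).trans_le hshift))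
      _ ≤ 2 * K + 1 := by linarith
  · exact tendsto_div_of_abs_sub_mul_le (tendsto_natCast_atTop_atTop.comp hAB) fun n => hK _ _

theorem balanced_word_of_one_dim_function_general
    (d : ℕ) (a : ℝ)
    (f : ℤ → ℝ) (hb : ∃ C, ∀ m : ℤ, |f m| ≤ C)
    (hf : ∀ m : ℤ,
      (∑ i ∈ Finset.range (d + 1), (-1 : ℝ) ^ (d - i) * (d.choose i : ℝ) * f (m + i)) = a ∨
      (∑ i ∈ Finset.range (d + 1), (-1 : ℝ) ^ (d - i) * (d.choose i : ℝ) * f (m + i)) = a - 1) :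
    ∃ w : (Fin d → ℤ) → ℕ,
      (∀ g, w g = 0 ∨ w g = 1) ∧
      (∃ M : ℝ, 0 < M ∧ ∀ A B t : Fin d → ℤ,
        |(((Fintype.piFinset (fun i => Finset.Ico (A i) (B i))).filter
            (fun g => w g = 1)).card : ℝ) -
          (((Fintype.piFinset (fun i => Finset.Ico (A i + t i) (B i + t i))).filter
            (fun g => w g = 1)).card : ℝ)| ≤ M) ∧
      (∀ A B : ℕ → (Fin d → ℤ),
        Tendsto (fun n => (Fintype.piFinset (fun i => Finset.Ico (A n i) (B n i))).card)
          atTop atTop →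
        Tendsto (fun n =>
            ((((Fintype.piFinset (fun i => Finset.Ico (A n i) (B n i))).filter
                (fun g => w g = 1)).card : ℝ) /
              ((Fintype.piFinset (fun i => Finset.Ico (A n i) (B n i))).card : ℝ)))
          atTop (nhds a)) := by
  classical
  obtain ⟨C, hC⟩ := hb
  set g := Δ_[1] ^[d] f
  have hg : ∀ m, g m = a ∨ g m = a - 1 := fun m => by
    simpa only [g, fwdDiff_iter_eq_sum_choose] using hf m
  set w : (Fin d → ℤ) → ℕ := fun x => if g (∑ i, x i) = a - 1 then 1 else 0
  have hw : ∀ x, w x = 1 ↔ g (∑ i, x i) = a - 1 := fun x => by simp [w]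
  have discrepancy :
      ∀ A B, |(#{x ∈ intBox A B | w x = 1} : ℝ) - a * #(intBox A B)| ≤ 2 ^ d * C := by
    intro A B
    rw [filter_congr fun x _ => hw x, card_filter_eq_mul_card_sub_sum _ fun x _ => hg _,
      sub_sub_cancel_left, abs_neg]
    simpa using norm_sum_intBox_fwdDiff_iter_le (by simpa using hC : ∀ m, ‖f m‖ ≤ C) d 0 A B
  exact ⟨w, fun x => by by_cases h : g (∑ i, x i) = a - 1 <;> simp [w, h],
    balanced_and_density_of_discrepancy_le w discrepancy⟩

theorem balanced_word_of_one_dim_function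
    (d : ℕ) (hd : 1 ≤ d) (a : ℝ) (ha : a ∈ Set.Icc (0:ℝ) 1)
    (f : ℤ → ℝ) (hb : ∃ C, ∀ m : ℤ, |f m| ≤ C)
    (hf : ∀ m : ℤ,
      (∑ i ∈ Finset.range (d + 1), (-1 : ℝ) ^ (d - i) * (d.choose i : ℝ) * f (m + i)) = a ∨
      (∑ i ∈ Finset.range (d + 1), (-1 : ℝ) ^ (d - i) * (d.choose i : ℝ) * f (m + i)) = a - 1) :
    ∃ w : (Fin d → ℤ) → ℕ,
      (∀ g, w g = 0 ∨ w g = 1) ∧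
      (∃ M : ℝ, 0 < M ∧ ∀ A B t : Fin d → ℤ,
        |(((Fintype.piFinset (fun i => Finset.Ico (A i) (B i))).filter
            (fun g => w g = 1)).card : ℝ) -
          (((Fintype.piFinset (fun i => Finset.Ico (A i + t i) (B i + t i))).filter
            (fun g => w g = 1)).card : ℝ)| ≤ M) ∧
      (∀ A B : ℕ → (Fin d → ℤ),
        Tendsto (fun n => (Fintype.piFinset (fun i => Finset.Ico (A n i) (B n i))).card)
          atTop atTop →
        Tendsto (fun n =>
            ((((Fintype.piFinset (fun i => Finset.Ico (A n i) (B n i))).filter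
                (fun g => w g = 1)).card : ℝ) /
              ((Fintype.piFinset (fun i => Finset.Ico (A n i) (B n i))).card : ℝ)))
          atTop (nhds a)) :=
  balanced_word_of_one_dim_function_general d a f hb hf
end

section
/- Let d ≥ 2 be even and let x : ℕ → ℝ (indexed from 1) be a bounded sequence with x₁ = ⋯ = x_d = 0 such that ∑_{i=0}^d (-1)^{d-i} binom(d,i) x_{n+i} ∈ {a, a-1} for all n ≥ 1, where a ∈ [0,1]. Define f : ℤ → ℝ by f(m) = x_m for m ≥ 1 and f(m) = x_{d+1-m} for m ≤ 0. Then f is bounded and ∑_{i=0}^d (-1)^{d-i} binom(d,i) f(m+i) ∈ {a, a-1} for all m ∈ ℤ. -/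
open Finset

theorem reflection_extension_even
    (d : ℕ) (hd : 2 ≤ d) (hdeven : Even d) (a : ℝ) (ha : a ∈ Set.Icc (0:ℝ) 1)
    (x : ℕ → ℝ) (hb : ∃ C, ∀ n, |x n| ≤ C)
    (hx0 : ∀ i, 1 ≤ i → i ≤ d → x i = 0)
    (hx : ∀ n : ℕ, 1 ≤ n →
      (∑ i ∈ Finset.range (d + 1), (-1 : ℝ) ^ (d - i) * (d.choose i : ℝ) * x (n + i)) = a ∨
      (∑ i ∈ Finset.range (d + 1), (-1 : ℝ) ^ (d - i) * (d.choose i : ℝ) * x (n + i)) = a - 1)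
    (f : ℤ → ℝ)
    (hf1 : ∀ m : ℤ, 1 ≤ m → f m = x m.toNat)
    (hf2 : ∀ m : ℤ, m ≤ 0 → f m = x ((d : ℤ) + 1 - m).toNat) :
    (∃ C, ∀ m : ℤ, |f m| ≤ C) ∧
    ∀ m : ℤ,
      (∑ i ∈ Finset.range (d + 1), (-1 : ℝ) ^ (d - i) * (d.choose i : ℝ) * f (m + i)) = a ∨
      (∑ i ∈ Finset.range (d + 1), (-1 : ℝ) ^ (d - i) * (d.choose i : ℝ) * f (m + i)) = a - 1 := by
  obtain ⟨C, hC⟩ := hb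
  -- symmetry of f about (d+1)/2
  have hfsymm : ∀ k : ℤ, f k = f ((d : ℤ) + 1 - k) := by
    intro k
    rcases le_or_gt k 0 with hk | hk
    · rw [hf2 k hk, hf1 _ (by omega)]
    · rcases le_or_gt k d with hk2 | hk2
      · rw [hf1 k (by omega), hf1 _ (by omega),
          hx0 k.toNat (by omega) (by omega),
          hx0 ((d : ℤ) + 1 - k).toNat (by omega) (by omega)]
      · rw [hf2 ((d : ℤ) + 1 - k) (by omega), hf1 k (by omega)]
        congr 1
        omega
  -- positive case
  have hpos : ∀ m : ℤ, 1 ≤ m →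
      (∑ i ∈ Finset.range (d + 1), (-1 : ℝ) ^ (d - i) * (d.choose i : ℝ) * f (m + i)) = a ∨
      (∑ i ∈ Finset.range (d + 1), (-1 : ℝ) ^ (d - i) * (d.choose i : ℝ) * f (m + i)) = a - 1 := by
    intro m hm
    have heq : (∑ i ∈ Finset.range (d + 1), (-1 : ℝ) ^ (d - i) * (d.choose i : ℝ) * f (m + i))
        = ∑ i ∈ Finset.range (d + 1), (-1 : ℝ) ^ (d - i) * (d.choose i : ℝ) * x (m.toNat + i) := by
      refine Finset.sum_congr rfl fun i _ => ?_
      rw [hf1 (m + i) (by omega)]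
      congr 2
      omega
    rw [heq]
    exact hx m.toNat (by omega)
  constructor
  · refine ⟨C, fun m => ?_⟩
    rcases le_or_gt 1 m with hm | hm
    · rw [hf1 m hm]; exact hC _
    · rw [hf2 m (by omega)]; exact hC _
  · intro m
    rcases le_or_gt 1 m with hm | hm
    · exact hpos m hm
    · have key : (∑ i ∈ Finset.range (d + 1), (-1 : ℝ) ^ (d - i) * (d.choose i : ℝ) * f (m + i))
        = ∑ i ∈ Finset.range (d + 1), (-1 : ℝ) ^ (d - i) * (d.choose i : ℝ) * f ((1 - m) + i) := by
        rw [← Finset.sum_range_reflect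
          (fun i => (-1 : ℝ) ^ (d - i) * (d.choose i : ℝ) * f ((1 - m) + i)) (d + 1)]
        refine Finset.sum_congr rfl fun i hi => ?_
        simp only [Finset.mem_range] at hi
        have hi' : i ≤ d := by omega
        have h1 : d + 1 - 1 - i = d - i := by omega
        rw [h1]
        have h2 : d - (d - i) = i := by omega
        rw [h2, Nat.choose_symm hi']
        have h3 : (-1 : ℝ) ^ (d - i) = (-1 : ℝ) ^ i := by
          have : (-1 : ℝ) ^ (d - i) * (-1 : ℝ) ^ i = 1 := by
            rw [← pow_add]
            have : d - i + i = d := by omega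
            rw [this, hdeven.neg_one_pow]
          have h4 : ((-1 : ℝ) ^ i) * ((-1 : ℝ) ^ i) = 1 := by
            rw [← pow_add]; exact Even.neg_one_pow ⟨i, rfl⟩
          calc (-1 : ℝ) ^ (d - i) = (-1) ^ (d - i) * ((-1) ^ i * (-1) ^ i) := by
                rw [h4, mul_one]
            _ = ((-1) ^ (d - i) * (-1) ^ i) * (-1) ^ i := by ring
            _ = (-1) ^ i := by rw [this, one_mul]
        rw [h3]
        congr 1
        rw [hfsymm (m + i)]
        congr 1
        have : ((d - i : ℕ) : ℤ) = (d : ℤ) - i := by omega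
        omega
      rw [key]
      exact hpos (1 - m) (by omega)
end

section
/- Let a ∈ [0,1] and define h : ℝ² → {a, a-1} by h(x,y) = a-1 if y + a > 1 or (x > 0 and y + a > 0), and h(x,y) = a otherwise. Define T(x,y) = (x+y, y + h(x,y)) and (x_n, y_n) = T^n(0,0). Then -1 ≤ y_n ≤ 1 for all n ≥ 0. -/
theorem orbit_y_bounded
    (a : ℝ) (ha : a ∈ Set.Icc (0:ℝ) 1)
    (h : ℝ × ℝ → ℝ)
    (hh : ∀ p : ℝ × ℝ,
      h p = if p.2 + a > 1 ∨ (p.1 > 0 ∧ p.2 + a > 0) then a - 1 else a)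
    (T : ℝ × ℝ → ℝ × ℝ) (hT : ∀ p, T p = (p.1 + p.2, p.2 + h p)) :
    ∀ n : ℕ, -1 ≤ (T^[n] (0, 0)).2 ∧ (T^[n] (0, 0)).2 ≤ 1 := by
  obtain ⟨ha0, ha1⟩ := ha
  intro n
  induction n with
  | zero => norm_num
  | succ n ih =>
    rw [Function.iterate_succ_apply', hT, hh]
    set p := T^[n] (0, 0)
    obtain ⟨h1, h2⟩ := ih
    by_cases hc : p.2 + a > 1 ∨ (p.1 > 0 ∧ p.2 + a > 0)
    · have hpa : p.2 + a > 0 := by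
        rcases hc with hc | hc
        · linarith
        · exact hc.2
      simp only [if_pos hc]
      constructor <;> linarith
    · simp only [if_neg hc]
      push_neg at hc
      constructor <;> [linarith; linarith [hc.1]]
end

section
/- Let a ∈ (0,1) and define h : ℝ² → {a, a-1} by h(x,y) = a-1 if y + a > 1 or (x > 0 and y + a > 0), and h(x,y) = a otherwise. Define T(x,y) = (x+y, y + h(x,y)) and (x_n, y_n) = T^n(0,0). Then x_n ≤ 1/(1-a) + 2 for all n ≥ 0. -/
theorem orbit_x_bounded_above
    (a : ℝ) (ha : a ∈ Set.Ioo (0:ℝ) 1)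
    (h : ℝ × ℝ → ℝ)
    (hh : ∀ p : ℝ × ℝ,
      h p = if p.2 + a > 1 ∨ (p.1 > 0 ∧ p.2 + a > 0) then a - 1 else a)
    (T : ℝ × ℝ → ℝ × ℝ) (hT : ∀ p, T p = (p.1 + p.2, p.2 + h p)) :
    ∀ n : ℕ, (T^[n] (0, 0)).1 ≤ 1 / (1 - a) + 2 := by
  obtain ⟨ha0, ha1⟩ := ha
  have h1a : (0:ℝ) < 1 - a := by linarith
  have hinv : (0:ℝ) < 1 / (1 - a) := by positivity
  set g : ℝ → ℝ := fun y => if 0 < y then y^2/(2*(1-a)) + y/2 else -(1/8) with hg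
  have gpos : ∀ y : ℝ, 0 < y → g y = y^2/(2*(1-a)) + y/2 := by
    intro y hy; simp [hg, hy]
  have gneg : ∀ y : ℝ, ¬ 0 < y → g y = -(1/8) := by
    intro y hy; simp [hg, hy]
  have key : ∀ n : ℕ, (T^[n] (0, 0)).1 + g (T^[n] (0, 0)).2 ≤ 1/(1-a) + 15/8 := by
    intro n
    induction n with
    | zero =>
        show (0:ℝ) + g (0:ℝ) ≤ 1/(1-a) + 15/8
        rw [gneg 0 (by norm_num)]
        linarith
    | succ n ih =>
        rw [Function.iterate_succ_apply']
        set p := T^[n] (0, 0) with hp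
        rw [hT p, hh p]
        by_cases hc : p.2 + a > 1 ∨ (p.1 > 0 ∧ p.2 + a > 0)
        · rw [if_pos hc]
          show p.1 + p.2 + g (p.2 + (a - 1)) ≤ 1/(1-a) + 15/8
          by_cases hy1 : 1 - a < p.2
          · have hy0 : 0 < p.2 := by linarith
            have hy0' : 0 < p.2 + (a - 1) := by linarith
            rw [gpos _ hy0'] ; rw [gpos _ hy0] at ih
            have e : (p.2 + (a-1))^2/(2*(1-a))
                = p.2^2/(2*(1-a)) - p.2 + (1-a)/2 := by
              field_simp
              ring
            rw [e]
            linarith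
          · by_cases hy0 : 0 < p.2
            · have hy0' : ¬ (0 < p.2 + (a - 1)) := by push_neg; linarith
              rw [gneg _ hy0'] ; rw [gpos _ hy0] at ih
              have hd : p.2/2 - 1/8 ≤ p.2^2/(2*(1-a)) := by
                rw [le_div_iff₀ (by linarith : (0:ℝ) < 2*(1-a))]
                nlinarith [sq_nonneg (2*p.2 - (1-a))]
              linarith
            · push_neg at hy0
              have hy0' : ¬ (0 < p.2 + (a - 1)) := by push_neg; linarith
              rw [gneg _ hy0'] ; rw [gneg _ (by push_neg; exact hy0)] at ih
              linarith
        · rw [if_neg hc]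
          show p.1 + p.2 + g (p.2 + a) ≤ 1/(1-a) + 15/8
          push_neg at hc
          obtain ⟨hc1, hc2⟩ := hc
          by_cases hy : 0 < p.2 + a
          · have hx0 : p.1 ≤ 0 := by
              by_contra hx
              push_neg at hx
              exact absurd (hc2 hx) (by linarith)
            rw [gpos _ hy]
            have hd : (p.2 + a)^2/(2*(1-a)) ≤ 1/(2*(1-a)) := by
              apply div_le_div_of_nonneg_right ?_ (by linarith)
              nlinarith
            have e2 : 1/(2*(1-a)) = (1/(1-a))/2 := by
              field_simp
            linarith
          · have hy2 : ¬ (0 < p.2) := by push_neg at hy ⊢; linarith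
            rw [gneg _ hy] ; rw [gneg _ hy2] at ih
            push_neg at hy
            linarith
  intro n
  have hk := key n
  have hgl : -(1/8 : ℝ) ≤ g (T^[n] (0, 0)).2 := by
    by_cases hy : 0 < (T^[n] (0, 0)).2
    · rw [gpos _ hy]
      have : (0:ℝ) ≤ (T^[n] (0, 0)).2^2/(2*(1-a)) := by positivity
      linarith
    · rw [gneg _ hy]
  linarith
end

section
/- For every a ∈ [0,1] there exists a function h : ℝ² → {a, a-1} such that the orbit {T_h^n(0,0) : n ≥ 1} is a bounded subset of ℝ², where T_h(x,y) = (x+y, y + h(x,y)). -/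
/-!
For `0 < a < 1` put `c = a (1 - a)` and track `u = c x + y`. The map sends `x` to
`x + y = (1 - c) x + u`, so as long as `u` stays in `[0, 1)`, `x` stays in `[0, 1 / c]` and
`y = u - c x` in `(-1, 1)`. Choosing `h = a` makes the next `u` equal to
`v = (1 + c) u - c² x + a`, and `c ≤ a`, `a + c ≤ 1` put `v` in `[0, 2)`; so `h` can keep `u`
in `[0, 1)` like a fractional part, by switching to `a - 1` exactly when `v ≥ 1`.
For `a ∈ {0, 1}` the constant `h = 0` fixes the origin.
-/

open Function

noncomputable section

namespace BoundedOrbit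

def shearMap (h : ℝ × ℝ → ℝ) (p : ℝ × ℝ) : ℝ × ℝ :=
  (p.1 + p.2, p.2 + h p)

def feedback (a c : ℝ) (p : ℝ × ℝ) : ℝ :=
  if c * (p.1 + p.2) + p.2 + a < 1 then a else a - 1

lemma feedback_eq_or_eq (a c : ℝ) (p : ℝ × ℝ) : feedback a c p = a ∨ feedback a c p = a - 1 := by
  unfold feedback
  split_ifs <;> simp

def trappingRegion (c : ℝ) : Set (ℝ × ℝ) :=
  {p | 0 ≤ p.1 ∧ c * p.1 ≤ 1 ∧ 0 ≤ c * p.1 + p.2 ∧ c * p.1 + p.2 < 1}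

variable {a c : ℝ}

lemma zero_mem_trappingRegion : ((0 : ℝ), (0 : ℝ)) ∈ trappingRegion c := by
  simp [trappingRegion]

lemma mapsTo_shearMap_feedback (hc : 0 < c) (hca : c ≤ a) (hac : a + c ≤ 1) :
    Set.MapsTo (shearMap (feedback a c)) (trappingRegion c) (trappingRegion c) := by
  rintro ⟨x, y⟩ ⟨hx, hcx, hu0, hu1⟩
  dsimp only at hx hcx hu0 hu1
  have hv : c * (x + y) + y + a = (1 + c) * (c * x + y) - c * (c * x) + a := by ring
  have hccx0 : 0 ≤ c * (c * x) := by positivity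
  have hccx1 : c * (c * x) ≤ c := mul_le_of_le_one_right hc.le hcx
  have hv0 : 0 ≤ c * (x + y) + y + a := by nlinarith
  have hv2 : c * (x + y) + y + a < 2 := by nlinarith
  have hx' : 0 ≤ x + y := by nlinarith
  have hcx' : c * (x + y) ≤ 1 := by nlinarith
  simp only [trappingRegion, shearMap, feedback, Set.mem_ofPred_eq]
  split_ifs <;> refine ⟨hx', hcx', ?_, ?_⟩ <;> linarith

lemma norm_le_of_mem_trappingRegion (hc : 0 < c) (hc1 : c ≤ 1) {p : ℝ × ℝ}
    (hp : p ∈ trappingRegion c) : ‖p‖ ≤ 1 / c := by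
  obtain ⟨hx, hcx, hu0, hu1⟩ := hp
  have hx1 : p.1 ≤ 1 / c := by rwa [le_div_iff₀ hc, mul_comm]
  have hone : 1 ≤ 1 / c := by rwa [le_div_iff₀ hc, one_mul]
  have hcx0 : 0 ≤ c * p.1 := mul_nonneg hc.le hx
  rw [Prod.norm_def, Real.norm_eq_abs, Real.norm_eq_abs]
  exact max_le (abs_le.2 ⟨by linarith, hx1⟩) (abs_le.2 ⟨by linarith, by linarith⟩)

lemma norm_iterate_shearMap_feedback_le (hc : 0 < c) (hca : c ≤ a) (hac : a + c ≤ 1) (n : ℕ) :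
    ‖(shearMap (feedback a c))^[n] (0, 0)‖ ≤ 1 / c :=
  norm_le_of_mem_trappingRegion hc (by linarith)
    ((mapsTo_shearMap_feedback hc hca hac).iterate n zero_mem_trappingRegion)

end BoundedOrbit

end

open BoundedOrbit in
theorem exists_h_with_bounded_orbit
    (a : ℝ) (ha : a ∈ Set.Icc (0:ℝ) 1) :
    ∃ h : ℝ × ℝ → ℝ,
      (∀ p, h p = a ∨ h p = a - 1) ∧
      ∃ C : ℝ, ∀ n : ℕ, 1 ≤ n →
        ‖(fun p : ℝ × ℝ => (p.1 + p.2, p.2 + h p))^[n] (0, 0)‖ ≤ C := by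
  obtain ⟨ha0, ha1⟩ := ha
  by_cases hend : a = 0 ∨ a = 1
  · refine ⟨fun _ => 0, fun _ => by rcases hend with rfl | rfl <;> simp, 0, fun n _ => ?_⟩
    rw [iterate_fixed (by simp)]
    simp
  push Not at hend
  have ha0' : 0 < a := lt_of_le_of_ne ha0 (Ne.symm hend.1)
  have ha1' : a < 1 := lt_of_le_of_ne ha1 hend.2
  refine ⟨feedback a (a * (1 - a)), feedback_eq_or_eq a _, 1 / (a * (1 - a)), fun n _ => ?_⟩
  exact norm_iterate_shearMap_feedback_le (by nlinarith) (by nlinarith) (by nlinarith) n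
end

section
/- For every a ∈ [0,1] there exists a bounded sequence x : ℕ → ℝ (indexed from 1) with x₁ = x₂ = 0 such that x_{n+2} - 2x_{n+1} + x_n ∈ {a, a-1} for all n ≥ 1. -/
/-- One step of the controlled map `(x,d) ↦ (x+d, d+a-ε)` with `ε ∈ {0,1}`
chosen greedily to keep `Q₋ = d² + (1-a)(2x+d)` small. -/
noncomputable def bsdStep (a : ℝ) (p : ℝ × ℝ) : ℝ × ℝ :=
  if p.2 ^ 2 + (1 - a) * (2 * p.1 + p.2) + (2 * p.2 + a) ≤ 5 / 4 then
    (p.1 + p.2, p.2 + a)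
  else
    (p.1 + p.2, p.2 + a - 1)

noncomputable def bsdOrbit (a : ℝ) : ℕ → ℝ × ℝ :=
  fun n => (bsdStep a)^[n] (0, 0)

lemma bsdOrbit_zero (a : ℝ) : bsdOrbit a 0 = (0, 0) := rfl

lemma bsdOrbit_succ (a : ℝ) (n : ℕ) :
    bsdOrbit a (n + 1) = bsdStep a (bsdOrbit a n) := by
  unfold bsdOrbit
  rw [Function.iterate_succ_apply']

lemma bsdStep_fst (a : ℝ) (p : ℝ × ℝ) : (bsdStep a p).1 = p.1 + p.2 := by
  unfold bsdStep
  split_ifs <;> rfl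

lemma bsdStep_snd (a : ℝ) (p : ℝ × ℝ) :
    (bsdStep a p).2 = p.2 + a ∨ (bsdStep a p).2 = p.2 + a - 1 := by
  unfold bsdStep
  split_ifs
  · exact Or.inl rfl
  · exact Or.inr rfl

/-- Invariance of the region `{Q₊ ≤ 5/4, Q₋ ≤ 5/4}`. -/
lemma bsdStep_inv (a : ℝ) (ha0 : 0 ≤ a) (ha1 : a ≤ 1) (p : ℝ × ℝ)
    (h1 : p.2 ^ 2 - a * (2 * p.1 + p.2) ≤ 5 / 4)
    (h2 : p.2 ^ 2 + (1 - a) * (2 * p.1 + p.2) ≤ 5 / 4) :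
    (bsdStep a p).2 ^ 2 - a * (2 * (bsdStep a p).1 + (bsdStep a p).2) ≤ 5 / 4 ∧
    (bsdStep a p).2 ^ 2 + (1 - a) * (2 * (bsdStep a p).1 + (bsdStep a p).2) ≤ 5 / 4 := by
  unfold bsdStep
  split_ifs with h
  · refine ⟨?_, ?_⟩
    · simp only
      nlinarith [h1]
    · simp only
      nlinarith [h]
  · push_neg at h
    refine ⟨?_, ?_⟩
    · -- the hard case: by contradiction via the quadratic estimate
      simp only
      by_contra hg
      push_neg at hg
      set d := p.2 with hd
      set P := 2 * p.1 + p.2 with hP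
      set u := 2 * d + a with hu
      have hQp : d ^ 2 - a * P ≤ 5 / 4 := h1
      have hQm : d ^ 2 + (1 - a) * P ≤ 5 / 4 := h2
      have hh : 5 / 4 < d ^ 2 + (1 - a) * P + u := by
        simpa [hu] using h
      have hg' : 5 / 4 < d ^ 2 - a * P + 1 - u := by
        nlinarith [hg]
      have hu0 : 0 < u := by nlinarith
      have hu1 : u < 1 := by nlinarith
      -- d² = (1-a)Q₊ + aQ₋  and  d = (u-a)/2  give a contradiction
      nlinarith [mul_nonneg hu0.le (sub_nonneg.2 hu1.le),
        mul_nonneg (sub_nonneg.2 hu1.le) (by nlinarith : (0:ℝ) ≤ 4 * a - a ^ 2 + 1),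
        mul_nonneg hu0.le (by nlinarith : (0:ℝ) ≤ 4 - 2 * a - a ^ 2),
        mul_nonneg (mul_nonneg ha0 (sub_nonneg.2 ha1)) hu0.le,
        mul_nonneg (mul_nonneg ha0 (sub_nonneg.2 ha1)) (sub_nonneg.2 hu1.le)]
    · simp only
      nlinarith [h2]

lemma bsdOrbit_inv (a : ℝ) (ha0 : 0 ≤ a) (ha1 : a ≤ 1) (n : ℕ) :
    (bsdOrbit a n).2 ^ 2 - a * (2 * (bsdOrbit a n).1 + (bsdOrbit a n).2) ≤ 5 / 4 ∧
    (bsdOrbit a n).2 ^ 2 + (1 - a) * (2 * (bsdOrbit a n).1 + (bsdOrbit a n).2) ≤ 5 / 4 := by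
  induction n with
  | zero => norm_num [bsdOrbit_zero]
  | succ n ih =>
      rw [bsdOrbit_succ]
      exact bsdStep_inv a ha0 ha1 _ ih.1 ih.2

theorem exists_bounded_sequence_second_difference
    (a : ℝ) (ha : a ∈ Set.Icc (0:ℝ) 1) :
    ∃ x : ℕ → ℝ,
      (∃ C, ∀ n, |x n| ≤ C) ∧ x 1 = 0 ∧ x 2 = 0 ∧
      ∀ n : ℕ, 1 ≤ n →
        (x (n + 2) - 2 * x (n + 1) + x n = a ∨ x (n + 2) - 2 * x (n + 1) + x n = a - 1) := by
  obtain ⟨ha0, ha1⟩ := ha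
  -- degenerate endpoints: the zero sequence works
  rcases eq_or_lt_of_le ha0 with h0 | h0
  · exact ⟨fun _ => 0, ⟨0, fun n => by simp⟩, rfl, rfl, fun n _ => Or.inl (by simp [← h0])⟩
  rcases eq_or_lt_of_le ha1 with h1 | h1
  · exact ⟨fun _ => 0, ⟨0, fun n => by simp⟩, rfl, rfl, fun n _ => Or.inr (by simp [h1])⟩
  -- main case 0 < a < 1
  refine ⟨fun n => (bsdOrbit a (n - 1)).1, ?_, ?_, ?_, ?_⟩
  · refine ⟨5 / (8 * a) + 5 / (8 * (1 - a)) + 1, fun n => ?_⟩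
    obtain ⟨hQp, hQm⟩ := bsdOrbit_inv a ha0 ha1 (n - 1)
    set X := (bsdOrbit a (n - 1)).1 with hX
    set d := (bsdOrbit a (n - 1)).2 with hd
    have hd2 : d ^ 2 ≤ 5 / 4 := by nlinarith [mul_nonneg ha0 (sub_nonneg.2 ha1)]
    have hdabs : -(3 / 2) ≤ d ∧ d ≤ 3 / 2 := by constructor <;> nlinarith
    have hpa : 0 < 8 * a := by linarith
    have hpb : 0 < 8 * (1 - a) := by linarith
    rw [abs_le]
    constructor
    · -- lower bound from Q₊
      have key : -(X + d / 2) ≤ 5 / (8 * a) := by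
        rw [le_div_iff₀ hpa]
        nlinarith
      have hpos : 0 < 5 / (8 * (1 - a)) := by positivity
      nlinarith
    · -- upper bound from Q₋
      have key : X + d / 2 ≤ 5 / (8 * (1 - a)) := by
        rw [le_div_iff₀ hpb]
        nlinarith
      have hpos : 0 < 5 / (8 * a) := by positivity
      nlinarith
  · simp [bsdOrbit_zero]
  · have : bsdOrbit a 1 = bsdStep a (0, 0) := bsdOrbit_succ a 0
    simp only [show (2:ℕ) - 1 = 1 from rfl, this, bsdStep_fst]
    norm_num
  · intro n hn
    obtain ⟨m, rfl⟩ := Nat.exists_eq_add_of_le hn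
    simp only [show 1 + m + 2 - 1 = m + 2 from by omega,
      show 1 + m + 1 - 1 = m + 1 from by omega, show 1 + m - 1 = m from by omega]
    have f2 : (bsdOrbit a (m + 2)).1 = (bsdOrbit a (m + 1)).1 + (bsdOrbit a (m + 1)).2 := by
      rw [bsdOrbit_succ, bsdStep_fst]
    have f1 : (bsdOrbit a (m + 1)).1 = (bsdOrbit a m).1 + (bsdOrbit a m).2 := by
      rw [bsdOrbit_succ, bsdStep_fst]
    have f0 : (bsdOrbit a (m + 1)).2 = (bsdOrbit a m).2 + a ∨
        (bsdOrbit a (m + 1)).2 = (bsdOrbit a m).2 + a - 1 := by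
      rw [bsdOrbit_succ]; exact bsdStep_snd a _
    rcases f0 with h | h
    · left; rw [f2, f1, h]; ring
    · right; rw [f2, f1, h]; ring
end

section
/- Let a ∈ (0,1) and define h : ℝ² → {a, a-1} by h(x,y) = a-1 if y + a > 1 or (x > 0 and y + a > 0), and h(x,y) = a otherwise. Define (x_n, y_n) = T^n(0,0) where T(x,y) = (x+y, y + h(x,y)). Then for all n: if y_n ≤ 0 and x_n > 0, then y_{n+1} ≤ 0; and if y_n ≥ 0 and x_n ≤ 0, then y_{n+1} ≥ 0. -/
theorem orbit_sign_absorption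
    (a : ℝ) (ha : a ∈ Set.Ioo (0:ℝ) 1)
    (h : ℝ × ℝ → ℝ)
    (hh : ∀ p : ℝ × ℝ,
      h p = if p.2 + a > 1 ∨ (p.1 > 0 ∧ p.2 + a > 0) then a - 1 else a)
    (T : ℝ × ℝ → ℝ × ℝ) (hT : ∀ p, T p = (p.1 + p.2, p.2 + h p)) :
    ∀ n : ℕ,
      (((T^[n] (0, 0)).2 ≤ 0 ∧ (T^[n] (0, 0)).1 > 0) → (T^[n + 1] (0, 0)).2 ≤ 0) ∧
      (((T^[n] (0, 0)).2 ≥ 0 ∧ (T^[n] (0, 0)).1 ≤ 0) → (T^[n + 1] (0, 0)).2 ≥ 0) := by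
  obtain ⟨ha0, ha1⟩ := ha
  intro n
  set p := T^[n] (0, 0) with hp
  have hstep : T^[n + 1] (0, 0) = T p := by
    rw [Function.iterate_succ_apply']
  rw [hstep, hT p, hh p]
  constructor
  · rintro ⟨hy, hx⟩
    by_cases hc : p.2 + a > 1 ∨ (p.1 > 0 ∧ p.2 + a > 0)
    · simp only [hc, if_pos]
      linarith
    · simp only [hc, if_neg, not_false_iff]
      push_neg at hc
      have := hc.2 hx
      linarith
  · rintro ⟨hy, hx⟩
    by_cases hc : p.2 + a > 1 ∨ (p.1 > 0 ∧ p.2 + a > 0)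
    · simp only [hc, if_pos]
      rcases hc with h1 | ⟨h2, _⟩
      · linarith
      · linarith
    · simp only [hc, if_neg, not_false_iff]
      linarith
end
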